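/- arXiv:2206.01054 — 3 statements merged into one kernel-verified Lean document; each statement's English description precedes it below -/
import Mathlib

section
/- Let G be a finite group. A permutation π of G is an automorphism of the directed reduced power graph →RP(G) if and only if π can be written as a product τ·σ, where τ is a permutation of G fixing every ≃-class of G setwise and σ is a P(G)-permutation. (Equivalently, Aut(→RP(G)) = N·P, where N is the group of permutations fixing every ≃-class setwise and P is the group of P(G)-permutations.) -/
open Subgroup Set

variable (G : Type*) [Group G]

/-- Arc of the directed reduced power graph `→RP(G)`: from `x` to `y` iff `⟨y⟩ ⊊ ⟨x⟩`. -/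
def rpArc (x y : G) : Prop := zpowers y < zpowers x

/-- Adjacency in the undirected reduced power graph `RP(G)`:
`x` and `y` are adjacent iff `⟨x⟩ ⊊ ⟨y⟩` or `⟨y⟩ ⊊ ⟨x⟩`. -/
def rpAdj (x y : G) : Prop := zpowers x < zpowers y ∨ zpowers y < zpowers x

/-- `x ≃ y` iff `x` and `y` have the same neighbourhood in `RP(G)`. -/
def simEq (x y : G) : Prop := ∀ z : G, rpAdj G x z ↔ rpAdj G y z

/-- The `≃`-class `x̂` of `x`. -/
def hatCls (x : G) : Set G := {y | simEq G y x}

/-- The `∼`-class `[x]` of `x`: the set of generators of `⟨x⟩`. -/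
def genCls (x : G) : Set G := {y | zpowers y = zpowers x}

/-- The automorphism group of the directed reduced power graph `→RP(G)`,
as a subgroup of the permutations of `G`. -/
def DRPAut : Subgroup (Equiv.Perm G) where
  carrier := {π | ∀ x y : G, rpArc G (π x) (π y) ↔ rpArc G x y}
  one_mem' := fun _ _ => Iff.rfl
  mul_mem' := by
    intro a b ha hb x y
    simp only [Equiv.Perm.mul_apply]
    exact (ha (b x) (b y)).trans (hb x y)
  inv_mem' := by
    intro a ha x y
    have h := ha (a⁻¹ x) (a⁻¹ y)
    simp only [Equiv.Perm.coe_inv, Equiv.apply_symm_apply] at h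
    exact h.symm

/-- The automorphism group of the undirected reduced power graph `RP(G)`,
as a subgroup of the permutations of `G`. -/
def RPAut : Subgroup (Equiv.Perm G) where
  carrier := {π | ∀ x y : G, rpAdj G (π x) (π y) ↔ rpAdj G x y}
  one_mem' := fun _ _ => Iff.rfl
  mul_mem' := by
    intro a b ha hb x y
    simp only [Equiv.Perm.mul_apply]
    exact (ha (b x) (b y)).trans (hb x y)
  inv_mem' := by
    intro a ha x y
    have h := ha (a⁻¹ x) (a⁻¹ y)
    simp only [Equiv.Perm.coe_inv, Equiv.apply_symm_apply] at h
    exact h.symm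

/-- `⟨x⟩` is a maximal cyclic subgroup of `G`. -/
def IsMaxCyc (x : G) : Prop := ∀ y : G, zpowers x ≤ zpowers y → zpowers x = zpowers y

/-- The `≃`-class of `x` is of Type I: it is a single `∼`-class, `x̂ = [x]`. -/
def TypeI (x : G) : Prop := hatCls G x = genCls G x

/-- The `≃`-class of `x` is of Type II: it is a union of `r ≥ 2` `∼`-classes whose
cyclic subgroups are distinct maximal cyclic subgroups of `G`, all of the same order. -/
def TypeII (x : G) : Prop :=
  (∃ y z : G, simEq G y x ∧ simEq G z x ∧ zpowers y ≠ zpowers z) ∧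
  ∀ y : G, simEq G y x → IsMaxCyc G y ∧ orderOf y = orderOf x

/-- The `≃`-class of `x` is of Type III: `G` is non-cyclic, the class is a union of
`r ≥ 2` `∼`-classes whose cyclic subgroups are maximal cyclic subgroups of prime order,
and at least two distinct orders occur. -/
def TypeIII (x : G) : Prop :=
  ¬ IsCyclic G ∧
  (∃ y z : G, simEq G y x ∧ simEq G z x ∧ orderOf y ≠ orderOf z) ∧
  ∀ y : G, simEq G y x → IsMaxCyc G y ∧ (orderOf y).Prime

/-- The `≃`-class of `x` is of Type IV with parameter `(p, q)`: it is a union of exactly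
two `∼`-classes of elements of distinct prime orders `p` and `q`, the corresponding cyclic
subgroups being non-maximal when `G` is non-cyclic, and maximal when `G` is cyclic. -/
def TypeIV (x : G) (p q : ℕ) : Prop :=
  p.Prime ∧ q.Prime ∧ p ≠ q ∧
  (∃ x₁ x₂ : G, simEq G x₁ x ∧ simEq G x₂ x ∧ orderOf x₁ = p ∧ orderOf x₂ = q ∧
     ∀ y : G, simEq G y x → zpowers y = zpowers x₁ ∨ zpowers y = zpowers x₂) ∧
  ((¬ IsCyclic G ∧ ∀ y : G, simEq G y x → ¬ IsMaxCyc G y) ∨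
   (IsCyclic G ∧ ∀ y : G, simEq G y x → IsMaxCyc G y))

/-- A `P(G)`-permutation: a permutation `σ` of `G` preserving element orders, mapping each
`∼`-class `[x]` onto `[x^σ]`, and preserving inclusion and non-inclusion of cyclic subgroups. -/
def IsPPerm (σ : Equiv.Perm G) : Prop :=
  (∀ x : G, orderOf (σ x) = orderOf x) ∧
  (∀ x : G, σ '' genCls G x = genCls G (σ x)) ∧
  (∀ x y : G, zpowers y ≤ zpowers x ↔ zpowers (σ y) ≤ zpowers (σ x))

/-- A permutation of `G` fixing every `≃`-class setwise. -/
def FixesClasses (τ : Equiv.Perm G) : Prop := ∀ x : G, simEq G (τ x) x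

/-!
An automorphism `π` of `→RP(G)` maps the sets `below x = {z | ⟨z⟩ ⊊ ⟨x⟩}` and
`above x = {z | ⟨x⟩ ⊊ ⟨z⟩}` of `x` onto those of `π x`, so it permutes the `≃`-classes; and a
permutation fixing every `≃`-class is an automorphism. It therefore suffices to find a
`P(G)`-permutation `σ` with `σ x ≃ π x` for all `x`, for then `τ = π σ⁻¹` fixes the classes. Such
a `σ` can be assembled one `∼`-class at a time as soon as, for every `x` and `n`, the classes `x̂`
and `(π x)̂` contain equally many elements of order `n` (a `∼`-class of order `n` has `φ(n)`
elements).

That count is where the group theory enters. Since `o(x) = |below x| + φ(o(x))`, a class made of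
a single `∼`-class has its order fixed by `|below x|` and `|x̂|`, which `π` preserves. If `x̂`
contains two different cyclic subgroups, then `below x` is their intersection, so `⟨x⟩` is a
cyclic `p`-group with `o(x) = p |below x|`; for `|below x| ≥ 2` this fixes the order, and a
divisibility argument shows that such a class cannot be mapped onto a single `∼`-class. The
remaining classes consist of elements of prime order: either nothing lies above them, and then
`π x ≃ x`, or they lie in a cyclic group `⟨w⟩` of order `p r` whose order `π` preserves, and `|x̂|`
tells which of the orders `p`, `r` occur in it.
-/

namespace Setoid

variable {α : Type*}

theorem ncard_eq_mul_ncard_image_mk [Finite α] (r : Setoid α) {A : Set α} {s : ℕ}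
    (hA : ∀ x ∈ A, ∀ y, r y x → y ∈ A) (hs : ∀ x ∈ A, Nat.card {y // r y x} = s) :
    A.ncard = s * (Quotient.mk r '' A).ncard := by
  classical
  have := Fintype.ofFinite α
  have hfib : ∀ c ∈ (Quotient.mk r '' A).toFinset,
      (A.toFinset.filter fun x => Quotient.mk r x = c).card = s := by
    intro c hc
    obtain ⟨x, hx, rfl⟩ := Set.mem_toFinset.mp hc
    rw [← hs x hx, Nat.card_eq_fintype_card, Fintype.card_subtype]
    congr 1
    ext y
    simp only [Finset.mem_filter, Set.mem_toFinset, Finset.mem_univ, true_and, Quotient.eq]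
    exact ⟨fun h => h.2, fun h => ⟨hA x hx y h, h⟩⟩
  rw [Set.ncard_eq_toFinset_card', Set.ncard_eq_toFinset_card',
    Finset.card_eq_sum_card_fiberwise (f := Quotient.mk r) (t := (Quotient.mk r '' A).toFinset)
      (fun x hx => by simpa using ⟨x, by simpa using hx, rfl⟩),
    Finset.sum_congr rfl hfib, Finset.sum_const, smul_eq_mul, mul_comm]

variable {r : Setoid α} {β : Type*} {f g : α → β} (s : β → ℕ)

theorem card_fiber_mk (hf : ∀ x y, r x y → f x = f y)
    (hs : ∀ x, Nat.card {y // r y x} = s (f x)) (c : Quotient r) :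
    Nat.card {x // Quotient.mk r x = c} = s (Quotient.lift f hf c) := by
  induction c using Quotient.inductionOn with
  | h x => exact (Nat.card_congr (Equiv.subtypeEquivRight fun y => Quotient.eq)).trans (hs x)

variable [Finite α]

theorem card_fiber_eq_mul (hf : ∀ x y, r x y → f x = f y)
    (hs : ∀ x, Nat.card {y // r y x} = s (f x)) (b : β) :
    Nat.card {x // f x = b} = s b * Nat.card {c // Quotient.lift f hf c = b} := by
  have himage : Quotient.mk r '' {x | f x = b} = {c | Quotient.lift f hf c = b} := by
    ext c
    induction c using Quotient.inductionOn
    exact ⟨fun ⟨x, hx, hxc⟩ => (hf _ _ (Quotient.exact hxc)).symm.trans hx, fun h => ⟨_, h, rfl⟩⟩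
  change Nat.card {x | f x = b} = s b * Nat.card {c | Quotient.lift f hf c = b}
  rw [Nat.card_coe_set_eq, Nat.card_coe_set_eq, ← himage]
  exact ncard_eq_mul_ncard_image_mk r (fun x hx y hyx => (hf y x hyx).trans hx)
    (fun x hx => (hs x).trans (congrArg s hx))

theorem card_fiber_lift_eq (hf : ∀ x y, r x y → f x = f y) (hg : ∀ x y, r x y → g x = g y)
    (hfs : ∀ x, Nat.card {y // r y x} = s (f x)) (hgs : ∀ x, Nat.card {y // r y x} = s (g x))
    (hcard : ∀ b, Nat.card {x // f x = b} = Nat.card {x // g x = b}) (b : β) :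
    Nat.card {c // Quotient.lift f hf c = b} = Nat.card {c // Quotient.lift g hg c = b} := by
  by_cases hb : s b = 0
  · -- every class is nonempty, so no class is labelled `b`
    have hempty {h : α → β} (hh : ∀ x y, r x y → h x = h y)
        (hs : ∀ x, Nat.card {y // r y x} = s (h x)) :
        Nat.card {c // Quotient.lift h hh c = b} = 0 := by
      refine Nat.card_eq_zero.mpr (Or.inl (isEmpty_subtype _ |>.mpr fun c hc => ?_))
      have := card_fiber_mk s hh hs c
      rw [hc, hb] at this
      induction c using Quotient.inductionOn with
      | h x => exact (Finite.card_pos_iff.mpr ⟨⟨x, rfl⟩⟩).ne' this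
    rw [hempty hf hfs, hempty hg hgs]
  · exact Nat.eq_of_mul_eq_mul_left (Nat.pos_of_ne_zero hb)
      ((card_fiber_eq_mul s hf hfs b).symm.trans ((hcard b).trans (card_fiber_eq_mul s hg hgs b)))

theorem exists_perm_of_card_fiber_eq
    (hf : ∀ x y, r x y → f x = f y) (hg : ∀ x y, r x y → g x = g y)
    (hfs : ∀ x, Nat.card {y // r y x} = s (f x)) (hgs : ∀ x, Nat.card {y // r y x} = s (g x))
    (hcard : ∀ b, Nat.card {x // f x = b} = Nat.card {x // g x = b}) :
    ∃ σ : Equiv.Perm α, ∀ x y, g (σ x) = f x ∧ (r (σ y) (σ x) ↔ r y x) := by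
  let e : Quotient r ≃ Quotient r := Equiv.ofFiberEquiv fun b =>
    (Finite.card_eq.mp (card_fiber_lift_eq s hf hg hfs hgs hcard b)).some
  have he (c : Quotient r) : Quotient.lift g hg (e c) = Quotient.lift f hf c :=
    Equiv.ofFiberEquiv_map _ c
  have hfiber (c : Quotient r) :
      Nat.card {x // e (Quotient.mk r x) = c} = Nat.card {x // Quotient.mk r x = c} := by
    rw [Nat.card_congr (Equiv.subtypeEquivRight fun x => e.eq_symm_apply.symm),
      card_fiber_mk s hf hfs, card_fiber_mk s hg hgs, ← he, e.apply_symm_apply]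
  let σ : Equiv.Perm α := Equiv.ofFiberEquiv fun c => (Finite.card_eq.mp (hfiber c)).some
  have hσ (x : α) : Quotient.mk r (σ x) = e (Quotient.mk r x) := Equiv.ofFiberEquiv_map _ x
  refine ⟨σ, fun x y => ⟨?_, ?_⟩⟩
  · change Quotient.lift g hg (Quotient.mk r (σ x)) = Quotient.lift f hf (Quotient.mk r x)
    rw [hσ, he]
  · rw [← Quotient.eq, ← Quotient.eq, hσ, hσ, e.apply_eq_iff_eq]

end Setoid

section

variable {G}

theorem simEq.refl (x : G) : simEq G x x := fun _ => Iff.rfl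

theorem simEq.symm {x y : G} (h : simEq G x y) : simEq G y x := fun z => (h z).symm

theorem simEq.trans {x y z : G} (h : simEq G x y) (h' : simEq G y z) : simEq G x z :=
  fun t => (h t).trans (h' t)

theorem simEq_of_zpowers_eq {x y : G} (h : zpowers x = zpowers y) : simEq G x y := by
  intro z
  simp only [rpAdj, h]

theorem hatCls_eq_iff {x y : G} : hatCls G x = hatCls G y ↔ simEq G x y :=
  ⟨fun h => (h ▸ simEq.refl x : x ∈ hatCls G y),
    fun h => Set.ext fun _ => ⟨fun hz => hz.trans h, fun hz => hz.trans h.symm⟩⟩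

theorem typeI_iff {x : G} : TypeI G x ↔ ∀ y, simEq G y x → zpowers y = zpowers x :=
  ⟨fun h y hy => (h ▸ hy : y ∈ genCls G x),
    fun h => Set.ext fun y => ⟨h y, simEq_of_zpowers_eq⟩⟩

theorem not_typeI_iff {x : G} : ¬ TypeI G x ↔ ∃ y, simEq G y x ∧ zpowers y ≠ zpowers x := by
  simp [typeI_iff]

theorem typeI_iff_of_simEq {x y : G} (h : simEq G y x) : TypeI G y ↔ TypeI G x := by
  simp only [typeI_iff]
  refine ⟨fun hy z hz => (hy z (hz.trans h.symm)).trans (hy x h.symm).symm, fun hx z hz => ?_⟩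
  rw [hx z (hz.trans h), hx y h]

end

namespace ReducedPowerGraph

variable {G}

/-- The out-neighbourhood of `x` in `→RP(G)`; `above x` is its in-neighbourhood. -/
def below (x : G) : Set G := {z | zpowers z < zpowers x}

def above (x : G) : Set G := {z | zpowers x < zpowers z}

theorem not_lt_of_simEq {x y : G} (h : simEq G x y) : ¬ zpowers x < zpowers y := fun hlt =>
  ((h y).mp (Or.inl hlt)).elim (lt_irrefl _) (lt_irrefl _)

theorem below_subset_of_simEq {x y : G} (h : simEq G x y) : below x ⊆ below y := fun z hz =>
  ((h z).mp (Or.inr hz)).resolve_left fun hyz => not_lt_of_simEq h.symm (hyz.trans hz)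

theorem above_subset_of_simEq {x y : G} (h : simEq G x y) : above x ⊆ above y := fun z hz =>
  ((h z).mp (Or.inl hz)).resolve_right fun hzy => not_lt_of_simEq h (hz.trans hzy)

theorem simEq_iff {x y : G} : simEq G x y ↔ below x = below y ∧ above x = above y := by
  refine ⟨fun h => ⟨(below_subset_of_simEq h).antisymm (below_subset_of_simEq h.symm),
    (above_subset_of_simEq h).antisymm (above_subset_of_simEq h.symm)⟩, fun ⟨hb, ha⟩ z => ?_⟩
  change z ∈ above x ∨ z ∈ below x ↔ z ∈ above y ∨ z ∈ below y
  rw [hb, ha]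

theorem one_mem_below {x : G} (hx : x ≠ 1) : (1 : G) ∈ below x := by
  simpa [below, zpowers_one_eq_bot, bot_lt_iff_ne_bot] using hx

theorem zpowers_lt_of_le_of_orderOf_lt {x y : G} (hle : zpowers x ≤ zpowers y)
    (hlt : orderOf x < orderOf y) : zpowers x < zpowers y :=
  lt_of_le_of_ne hle fun h => hlt.ne (by rw [← Nat.card_zpowers, h, Nat.card_zpowers])

theorem coe_inf_eq_below {x y : G} (hy : simEq G y x) (hne : zpowers y ≠ zpowers x) :
    ((zpowers x ⊓ zpowers y : Subgroup G) : Set G) = below x := by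
  ext z
  simp only [coe_inf, Set.mem_inter_iff, SetLike.mem_coe, ← zpowers_le]
  refine ⟨fun ⟨hzx, hzy⟩ => lt_of_le_of_ne hzx fun h => ?_, fun hz => ⟨hz.le, ?_⟩⟩
  · exact not_lt_of_simEq hy.symm (lt_of_le_of_ne (h ▸ hzy) hne.symm)
  · exact (below_subset_of_simEq hy.symm hz).le

theorem one_mem_below_of_not_typeI {x : G} (hx : ¬ TypeI G x) : (1 : G) ∈ below x := by
  obtain ⟨y, hy, hne⟩ := not_typeI_iff.mp hx
  exact coe_inf_eq_below hy hne ▸ (zpowers x ⊓ zpowers y).one_mem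

theorem coe_zpowers_eq_below_union (x : G) :
    (zpowers x : Set G) = below x ∪ genCls G x := by
  ext z
  simp only [SetLike.mem_coe, ← zpowers_le, le_iff_lt_or_eq]
  rfl

theorem ncard_coe_zpowers (x : G) : (zpowers x : Set G).ncard = orderOf x := by
  rw [← Nat.card_coe_set_eq]
  exact Nat.card_zpowers x

section Automorphism

variable {π : Equiv.Perm G}

theorem image_below (hπ : π ∈ DRPAut G) (x : G) : π '' below x = below (π x) := by
  ext z
  obtain ⟨y, rfl⟩ := π.surjective z
  rw [π.injective.mem_set_image]
  exact (hπ x y).symm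

theorem image_above (hπ : π ∈ DRPAut G) (x : G) : π '' above x = above (π x) := by
  ext z
  obtain ⟨y, rfl⟩ := π.surjective z
  rw [π.injective.mem_set_image]
  exact (hπ y x).symm

theorem simEq_apply_iff (hπ : π ∈ DRPAut G) {x y : G} : simEq G (π x) (π y) ↔ simEq G x y := by
  simp only [simEq_iff, ← image_below hπ, ← image_above hπ,
    (Set.image_injective.mpr π.injective).eq_iff]

theorem image_hatCls (hπ : π ∈ DRPAut G) (x : G) : π '' hatCls G x = hatCls G (π x) := by
  ext z
  obtain ⟨y, rfl⟩ := π.surjective z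
  rw [π.injective.mem_set_image]
  exact (simEq_apply_iff hπ).symm

theorem ncard_below_apply (hπ : π ∈ DRPAut G) (x : G) : (below (π x)).ncard = (below x).ncard := by
  rw [← image_below hπ, Set.ncard_image_of_injective _ π.injective]

theorem ncard_hatCls_apply (hπ : π ∈ DRPAut G) (x : G) :
    (hatCls G (π x)).ncard = (hatCls G x).ncard := by
  rw [← image_hatCls hπ, Set.ncard_image_of_injective _ π.injective]

end Automorphism

def hatClsOfOrder (x : G) (n : ℕ) : Set G := {y | simEq G y x ∧ orderOf y = n}

theorem hatClsOfOrder_eq_ite {x : G} (h : ∀ y, simEq G y x → orderOf y = orderOf x) (n : ℕ) :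
    hatClsOfOrder x n = if orderOf x = n then hatCls G x else ∅ := by
  split_ifs with hn
  · exact Set.ext fun y => ⟨fun hy => hy.1, fun hy => ⟨hy, (h y hy).trans hn⟩⟩
  · exact Set.eq_empty_of_forall_notMem fun y hy => hn ((h y hy.1).symm.trans hy.2)

theorem mem_zpowers_of_simEq {x y w : G} (hw : w ∈ above x) (hy : simEq G y x) :
    y ∈ zpowers w :=
  zpowers_le.mp ((simEq_iff.mp hy).2 ▸ hw : w ∈ above y).le

theorem hatClsOfOrder_eq_empty {x : G} {p r n : ℕ} (hnp : n ≠ p) (hnr : n ≠ r)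
    (h : ∀ y, simEq G y x → orderOf y = p ∨ orderOf y = r) : hatClsOfOrder x n = ∅ :=
  Set.eq_empty_of_forall_notMem fun y hy =>
    (h y hy.1).elim (fun hp => hnp (hy.2.symm.trans hp)) (fun hr => hnr (hy.2.symm.trans hr))

section FiniteGroup

variable [Finite G]

theorem zpowers_eq_of_le_of_orderOf_le {x y : G} (hle : zpowers x ≤ zpowers y)
    (h : orderOf y ≤ orderOf x) : zpowers x = zpowers y :=
  Subgroup.eq_of_le_of_card_ge hle (by rwa [Nat.card_zpowers, Nat.card_zpowers])

theorem orderOf_lt_of_zpowers_lt {x y : G} (h : zpowers x < zpowers y) :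
    orderOf x < orderOf y :=
  lt_of_le_of_ne (Nat.le_of_dvd (orderOf_pos y) (orderOf_dvd_of_mem_zpowers (zpowers_le.mp h.le)))
    fun he => h.ne (zpowers_eq_of_le_of_orderOf_le h.le he.ge)

theorem mem_genCls_iff {x y : G} : y ∈ genCls G x ↔ y ∈ zpowers x ∧ orderOf y = orderOf x := by
  refine ⟨fun h => ⟨h ▸ mem_zpowers y, by rw [← Nat.card_zpowers, (h : zpowers y = _),
    Nat.card_zpowers]⟩, fun ⟨hy, ho⟩ => zpowers_eq_of_le_of_orderOf_le (zpowers_le.mpr hy) ho.ge⟩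

theorem ncard_genCls (x : G) : (genCls G x).ncard = (orderOf x).totient := by
  classical
  have := Fintype.ofFinite (zpowers x)
  have himage : genCls G x = Subtype.val '' {a : zpowers x | orderOf a = orderOf x} := by
    ext y
    rw [mem_genCls_iff]
    constructor
    · rintro ⟨hy, ho⟩
      exact ⟨⟨y, hy⟩, (Subgroup.orderOf_coe _).symm.trans ho, rfl⟩
    · rintro ⟨a, ha, rfl⟩
      exact ⟨a.2, (Subgroup.orderOf_coe a).trans ha⟩
  have hcard : orderOf x ∣ Fintype.card (zpowers x) := by
    rw [← Nat.card_eq_fintype_card, Nat.card_zpowers]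
  rw [himage, Set.ncard_image_of_injective _ Subtype.val_injective, Set.ncard_eq_toFinset_card',
    Set.toFinset_ofPred, IsCyclic.card_orderOf_eq_totient hcard]

theorem orderOf_eq_ncard_below_add (x : G) :
    orderOf x = (below x).ncard + (orderOf x).totient := by
  have hdisj : Disjoint (below x) (genCls G x) :=
    Set.disjoint_left.mpr fun z hz hz' => (hz : zpowers z < _).ne hz'
  rw [← ncard_genCls, ← Set.ncard_union_eq hdisj, ← coe_zpowers_eq_below_union,
    ncard_coe_zpowers]

theorem ncard_below_lt_orderOf (x : G) : (below x).ncard < orderOf x := by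
  have := orderOf_eq_ncard_below_add x
  have := Nat.totient_pos.mpr (orderOf_pos x)
  omega

theorem ncard_below_eq_one_iff {x : G} : (below x).ncard = 1 ↔ (orderOf x).Prime := by
  have := orderOf_eq_ncard_below_add x
  have := orderOf_pos x
  rw [← Nat.totient_eq_iff_prime (orderOf_pos x)]
  omega

theorem below_eq_singleton_one {x : G} (hx : (orderOf x).Prime) : below x = {1} := by
  obtain ⟨a, ha⟩ := Set.ncard_eq_one.mp (ncard_below_eq_one_iff.mpr hx)
  have h1 : (1 : G) ∈ below x := one_mem_below fun h => Nat.not_prime_one (by simpa [h] using hx)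
  rw [ha] at h1 ⊢
  rw [Set.mem_singleton_iff.mp h1]

theorem coe_zpowers_pow_subset_below {x : G} {ℓ : ℕ} (hℓ : 1 < ℓ) (hℓx : ℓ ∣ orderOf x) :
    (zpowers (x ^ ℓ) : Set G) ⊆ below x := fun z hz =>
  zpowers_lt_of_le_of_orderOf_lt (zpowers_le.mpr (zpowers_le.mpr (npow_mem_zpowers x ℓ) hz)) <|
    calc orderOf z ≤ orderOf (x ^ ℓ) :=
          Nat.le_of_dvd (orderOf_pos _) (orderOf_dvd_of_mem_zpowers hz)
      _ = orderOf x / ℓ := orderOf_pow_of_dvd (by omega) hℓx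
      _ < orderOf x := Nat.div_lt_self (orderOf_pos x) hℓ

theorem orderOf_div_le_ncard_below {x : G} {ℓ : ℕ} (hℓ : 1 < ℓ) (hℓx : ℓ ∣ orderOf x) :
    orderOf x / ℓ ≤ (below x).ncard := by
  rw [← orderOf_pow_of_dvd (by omega) hℓx, ← ncard_coe_zpowers]
  exact Set.ncard_le_ncard (coe_zpowers_pow_subset_below hℓ hℓx)

theorem zpowers_eq_zpowers_pow_div {w y : G} (hy : y ∈ zpowers w) :
    zpowers y = zpowers (w ^ (orderOf w / orderOf y)) := by
  obtain ⟨k, rfl : w ^ k = y⟩ := mem_powers_iff_mem_zpowers.mpr hy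
  have hn : orderOf (w ^ k) ∣ orderOf w := orderOf_dvd_of_mem_zpowers hy
  have hmk : orderOf w / orderOf (w ^ k) ∣ k := by
    have : orderOf w ∣ k * orderOf (w ^ k) :=
      orderOf_dvd_of_pow_eq_one (by rw [pow_mul, pow_orderOf_eq_one])
    exact Nat.dvd_of_mul_dvd_mul_right (orderOf_pos _) (by rwa [Nat.div_mul_cancel hn])
  set m := orderOf w / orderOf (w ^ k)
  refine zpowers_eq_of_le_of_orderOf_le (zpowers_le.mpr ?_) ?_
  · obtain ⟨j, hj⟩ := hmk
    rw [hj, pow_mul]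
    exact npow_mem_zpowers _ j
  · rw [orderOf_pow_of_dvd (Nat.div_pos (Nat.le_of_dvd (orderOf_pos w) hn) (orderOf_pos _)).ne'
      (Nat.div_dvd_of_dvd hn), Nat.div_div_self hn (orderOf_pos w).ne']

theorem zpowers_eq_of_orderOf_eq {w y z : G} (hy : y ∈ zpowers w) (hz : z ∈ zpowers w)
    (h : orderOf y = orderOf z) : zpowers y = zpowers z := by
  rw [zpowers_eq_zpowers_pow_div hy, zpowers_eq_zpowers_pow_div hz, h]

theorem prime_orderOf_div_of_minimal {x w : G} (hw : w ∈ above x)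
    (hmin : ∀ v ∈ above x, orderOf w ≤ orderOf v) : (orderOf w / orderOf x).Prime := by
  obtain ⟨t, ht⟩ := orderOf_dvd_of_mem_zpowers (zpowers_le.mp hw.le)
  have hx := orderOf_pos x
  have ht1 : 1 < t := by
    have := orderOf_lt_of_zpowers_lt hw
    rw [ht] at this
    exact (lt_mul_iff_one_lt_right hx).mp this
  rw [ht, Nat.mul_div_cancel_left _ hx]
  -- otherwise, writing `t = minFac t * v`, `⟨w ^ v⟩` lies above `⟨x⟩` and `o(w ^ v) < o(w)`
  by_contra htp
  set u := t.minFac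
  have hu : u.Prime := Nat.minFac_prime (by omega)
  obtain ⟨v, htuv⟩ := Nat.minFac_dvd t
  have hv : 2 ≤ v := by
    rcases v with _ | _ | v
    · omega
    · exact absurd (htuv.trans (mul_one u) ▸ hu) htp
    · omega
  have hxv : zpowers x ≤ zpowers (w ^ v) := by
    rw [zpowers_eq_zpowers_pow_div (zpowers_le.mp hw.le), ht, Nat.mul_div_cancel_left _ hx, htuv,
      mul_comm, pow_mul]
    exact zpowers_le.mpr (npow_mem_zpowers _ _)
  have hov : orderOf (w ^ v) = orderOf x * u := by
    rw [orderOf_pow_of_dvd (by omega) ⟨orderOf x * u, by rw [ht, htuv]; ring⟩, ht, htuv,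
      ← mul_assoc, Nat.mul_div_cancel _ (by omega)]
  have hmem : w ^ v ∈ above x :=
    zpowers_lt_of_le_of_orderOf_lt hxv (by rw [hov]; exact lt_mul_of_one_lt_right hx hu.one_lt)
  have := hmin _ hmem
  rw [hov, ht, htuv] at this
  nlinarith [hu.two_le]

/-- Two distinct cyclic subgroups with the same neighbourhood meet exactly in their common
set of non-generators, so `below x` is a subgroup of `⟨x⟩` containing `⟨x ^ ℓ⟩`. -/
theorem orderOf_eq_mul_ncard_below {x : G} {ℓ : ℕ} (hx : ¬ TypeI G x) (hℓ : ℓ.Prime)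
    (hℓx : ℓ ∣ orderOf x) : orderOf x = ℓ * (below x).ncard := by
  obtain ⟨y, hy, hne⟩ := not_typeI_iff.mp hx
  have hH : Nat.card (zpowers x ⊓ zpowers y : Subgroup G) = (below x).ncard := by
    rw [← coe_inf_eq_below hy hne]
    exact Nat.card_coe_set_eq ((zpowers x ⊓ zpowers y : Subgroup G) : Set G)
  have hdvd : (below x).ncard ∣ orderOf x := by
    rw [← hH, ← Nat.card_zpowers x]
    exact Subgroup.card_dvd_of_le inf_le_left
  have hdvd' : orderOf x / ℓ ∣ (below x).ncard := by
    rw [← hH, ← orderOf_pow_of_dvd hℓ.ne_zero hℓx, ← Nat.card_zpowers]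
    refine Subgroup.card_dvd_of_le fun z hz => ?_
    rw [← SetLike.mem_coe, coe_inf_eq_below hy hne]
    exact coe_zpowers_pow_subset_below hℓ.one_lt hℓx hz
  have hlt := ncard_below_lt_orderOf x
  obtain ⟨m, hm⟩ := hℓx
  rw [hm, Nat.mul_div_cancel_left _ hℓ.pos] at hdvd'
  obtain ⟨t, ht⟩ := hdvd'
  rw [hm, ht] at hdvd hlt ⊢
  have hm0 : 0 < m := Nat.pos_of_ne_zero fun h => by simp [h] at hlt
  rw [mul_comm ℓ m] at hdvd
  rcases hℓ.eq_one_or_self_of_dvd t (Nat.dvd_of_mul_dvd_mul_left hm0 hdvd) with rfl | rfl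
  · ring
  · exact absurd hlt (by rw [mul_comm]; exact lt_irrefl _)

theorem orderOf_eq_minFac_mul {x : G} (hx : ¬ TypeI G x) (hd : 2 ≤ (below x).ncard) :
    orderOf x = (below x).ncard.minFac * (below x).ncard := by
  have hx1 : orderOf x ≠ 1 := by
    have := ncard_below_lt_orderOf x
    omega
  have h := orderOf_eq_mul_ncard_below hx (Nat.minFac_prime hx1) (Nat.minFac_dvd _)
  exact orderOf_eq_mul_ncard_below hx (Nat.minFac_prime (by omega))
    (h ▸ Dvd.dvd.mul_left (Nat.minFac_dvd _) _)

theorem two_le_ncard_below {x : G} (hx : ¬ TypeI G x) (hd : (below x).ncard ≠ 1) :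
    2 ≤ (below x).ncard := by
  have := (Set.ncard_pos (Set.toFinite _)).mpr ⟨1, one_mem_below_of_not_typeI hx⟩
  omega

theorem orderOf_eq_of_simEq {x y : G} (hd : (below x).ncard ≠ 1) (hy : simEq G y x) :
    orderOf y = orderOf x := by
  by_cases hI : TypeI G x
  · rw [← Nat.card_zpowers, typeI_iff.mp hI y hy, Nat.card_zpowers]
  · have hI' : ¬ TypeI G y := (typeI_iff_of_simEq hy).not.mpr hI
    have hb : below y = below x := (simEq_iff.mp hy).1
    rw [orderOf_eq_minFac_mul hI' (hb ▸ two_le_ncard_below hI hd),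
      orderOf_eq_minFac_mul hI (two_le_ncard_below hI hd), hb]

theorem orderOf_eq_ncard_below_add_ncard_hatCls {x : G} (hx : TypeI G x) :
    orderOf x = (below x).ncard + (hatCls G x).ncard := by
  rw [hx, ncard_genCls]
  exact orderOf_eq_ncard_below_add x

theorem exists_ncard_hatCls_eq_totient_mul {x : G} (hx : ¬ TypeI G x)
    (hd : (below x).ncard ≠ 1) :
    ∃ c, 2 ≤ c ∧ (hatCls G x).ncard = (orderOf x).totient * c := by
  obtain ⟨y, hy, hne⟩ := not_typeI_iff.mp hx
  let r := Setoid.ker (zpowers : G → Subgroup G)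
  refine ⟨(Quotient.mk r '' hatCls G x).ncard, ?_, ?_⟩
  · refine (Set.one_lt_ncard_iff).mpr ⟨_, _, ⟨x, simEq.refl x, rfl⟩, ⟨y, hy, rfl⟩, fun h => ?_⟩
    exact hne (Quotient.exact h).symm
  · refine Setoid.ncard_eq_mul_ncard_image_mk r (fun z hz u hu => (simEq_of_zpowers_eq hu).trans hz)
      fun z hz => ?_
    rw [← orderOf_eq_of_simEq hd hz, ← ncard_genCls, ← Nat.card_coe_set_eq]
    rfl

theorem hatClsOfOrder_eq_genCls {x y : G} {n : ℕ} (hx : (above x).Nonempty)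
    (hy : y ∈ hatClsOfOrder x n) : hatClsOfOrder x n = genCls G y := by
  obtain ⟨w, hw⟩ := hx
  ext z
  refine ⟨fun hz => zpowers_eq_of_orderOf_eq (mem_zpowers_of_simEq hw hz.1)
    (mem_zpowers_of_simEq hw hy.1) (hz.2.trans hy.2.symm), fun hz => ?_⟩
  exact ⟨(simEq_of_zpowers_eq hz).trans hy.1, (mem_genCls_iff.mp hz).2.trans hy.2⟩

theorem ncard_hatClsOfOrder_eq_zero_or {x : G} (hx : (above x).Nonempty) (n : ℕ) :
    (hatClsOfOrder x n).ncard = 0 ∨ (hatClsOfOrder x n).ncard = n.totient := by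
  rcases (hatClsOfOrder x n).eq_empty_or_nonempty with h | ⟨y, hy⟩
  · exact Or.inl (by rw [h, Set.ncard_empty])
  · exact Or.inr (by rw [hatClsOfOrder_eq_genCls hx hy, ncard_genCls, hy.2])

theorem orderOf_eq_or_of_simEq {x y w : G} {p r : ℕ} (hx : (orderOf x).Prime) (hw : w ∈ above x)
    (hp : p.Prime) (hr : r.Prime) (hwpr : orderOf w = p * r) (hy : simEq G y x) :
    orderOf y = p ∨ orderOf y = r := by
  have hy' : (orderOf y).Prime :=
    ncard_below_eq_one_iff.mp ((simEq_iff.mp hy).1 ▸ ncard_below_eq_one_iff.mpr hx)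
  have hdvd : orderOf y ∣ p * r := hwpr ▸ orderOf_dvd_of_mem_zpowers (mem_zpowers_of_simEq hw hy)
  exact ((Nat.Prime.dvd_mul hy').mp hdvd).imp (Nat.prime_dvd_prime_iff_eq hy' hp).mp
    (Nat.prime_dvd_prime_iff_eq hy' hr).mp

theorem ncard_hatCls_eq_add {x : G} {p r : ℕ} (hpr : p ≠ r)
    (h : ∀ y, simEq G y x → orderOf y = p ∨ orderOf y = r) :
    (hatCls G x).ncard = (hatClsOfOrder x p).ncard + (hatClsOfOrder x r).ncard := by
  have hunion : hatCls G x = hatClsOfOrder x p ∪ hatClsOfOrder x r :=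
    Set.ext fun y => ⟨fun hy => (h y hy).imp (⟨hy, ·⟩) (⟨hy, ·⟩), fun hy => hy.elim (·.1) (·.1)⟩
  rw [hunion, Set.ncard_union_eq <|
    Set.disjoint_left.mpr fun y hyp hyr => hpr (hyp.2.symm.trans hyr.2)]

/-- Each of the orders `p`, `r` contributes one `∼`-class or none; as `p - 1`, `r - 1` and
`p + r - 2` are distinct, `|x̂|` tells which. -/
theorem ncard_hatClsOfOrder_eq_of_ncard_hatCls_eq {x x' : G} {p r : ℕ} (hp : p.Prime)
    (hr : r.Prime) (hpr : p ≠ r) (hx : (above x).Nonempty) (hx' : (above x').Nonempty)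
    (hxp : orderOf x = p) (hC : ∀ y, simEq G y x → orderOf y = p ∨ orderOf y = r)
    (hC' : ∀ y, simEq G y x' → orderOf y = p ∨ orderOf y = r)
    (hsize : (hatCls G x').ncard = (hatCls G x).ncard) (n : ℕ) :
    (hatClsOfOrder x' n).ncard = (hatClsOfOrder x n).ncard := by
  have hxp' : (hatClsOfOrder x p).ncard = p - 1 := by
    rw [hatClsOfOrder_eq_genCls hx ⟨simEq.refl x, hxp⟩, ncard_genCls, hxp, Nat.totient_prime hp]
  have hxr := ncard_hatClsOfOrder_eq_zero_or hx r
  have hx'p := ncard_hatClsOfOrder_eq_zero_or hx' p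
  have hx'r := ncard_hatClsOfOrder_eq_zero_or hx' r
  rw [Nat.totient_prime hp] at hx'p
  rw [Nat.totient_prime hr] at hxr hx'r
  have := ncard_hatCls_eq_add hpr hC
  have := ncard_hatCls_eq_add hpr hC'
  have := hp.two_le
  have := hr.two_le
  by_cases hnp : n = p
  · rw [hnp]
    omega
  by_cases hnr : n = r
  · rw [hnr]
    omega
  rw [hatClsOfOrder_eq_empty hnp hnr hC, hatClsOfOrder_eq_empty hnp hnr hC']

section Automorphism

variable {π : Equiv.Perm G}

/-- Were `(π x)̂` a single `∼`-class, `o(π x) = d + c (p - 1) d` with `c ≥ 2` and `p = minFac d`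
would be divisible by `p`, while `⟨(π x) ^ p⟩ ⊆ below (π x)` forces `o(π x) ≤ p d`. -/
theorem not_typeI_apply (hπ : π ∈ DRPAut G) {x : G} (hx : ¬ TypeI G x)
    (hd : 2 ≤ (below x).ncard) : ¬ TypeI G (π x) := by
  intro hI
  set d := (below x).ncard
  have hp : d.minFac.Prime := Nat.minFac_prime (by omega)
  have hpd : d.minFac ∣ d := Nat.minFac_dvd d
  obtain ⟨c, hc, hcard⟩ := exists_ncard_hatCls_eq_totient_mul hx (by omega)
  have hφ : (orderOf x).totient + d = d.minFac * d := by
    have h1 := orderOf_eq_ncard_below_add x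
    have h2 := orderOf_eq_minFac_mul hx hd
    linarith
  have horder : orderOf (π x) = d + (orderOf x).totient * c := by
    rw [orderOf_eq_ncard_below_add_ncard_hatCls hI, ncard_below_apply hπ, ncard_hatCls_apply hπ,
      hcard]
  have hdvd : d.minFac ∣ orderOf (π x) := by
    have : d.minFac ∣ (orderOf x).totient :=
      (Nat.dvd_add_left hpd).mp (hφ ▸ Nat.dvd_mul_right _ _)
    rw [horder]
    exact dvd_add hpd (Dvd.dvd.mul_right this c)
  have hle := orderOf_div_le_ncard_below hp.one_lt hdvd
  rw [ncard_below_apply hπ] at hle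
  obtain ⟨k, hk⟩ := hdvd
  rw [hk, Nat.mul_div_cancel_left _ hp.pos] at hle
  nlinarith [hp.two_le]

theorem typeI_apply_iff (hπ : π ∈ DRPAut G) {x : G} (hd : (below x).ncard ≠ 1) :
    TypeI G (π x) ↔ TypeI G x := by
  refine ⟨fun hI => by_contra fun hx => not_typeI_apply hπ hx (two_le_ncard_below hx hd) hI,
    fun hx => by_contra fun hI => ?_⟩
  have hd' : (below (π x)).ncard ≠ 1 := by rwa [ncard_below_apply hπ]
  have := not_typeI_apply (inv_mem hπ) hI (two_le_ncard_below hI hd')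
  simp [hx] at this

theorem orderOf_apply (hπ : π ∈ DRPAut G) {x : G} (hd : (below x).ncard ≠ 1) :
    orderOf (π x) = orderOf x := by
  by_cases hI : TypeI G x
  · rw [orderOf_eq_ncard_below_add_ncard_hatCls ((typeI_apply_iff hπ hd).mpr hI),
      orderOf_eq_ncard_below_add_ncard_hatCls hI, ncard_below_apply hπ, ncard_hatCls_apply hπ]
  · have hd2 := two_le_ncard_below hI hd
    rw [orderOf_eq_minFac_mul ((typeI_apply_iff hπ hd).not.mpr hI) (by rwa [ncard_below_apply hπ]),
      orderOf_eq_minFac_mul hI hd2, ncard_below_apply hπ]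

/-- For `⟨w⟩` of least order above `⟨x⟩`, `o(w) = p r` with `r` prime, and `π` preserves `o(w)`;
so `x̂` and `(π x)̂`, which lie in `⟨w⟩` and `⟨π w⟩`, consist of elements of order `p` or `r`. -/
theorem ncard_hatClsOfOrder_apply_of_prime (hπ : π ∈ DRPAut G) {x : G}
    (hx : (orderOf x).Prime) (habove : (above x).Nonempty) (n : ℕ) :
    (hatClsOfOrder (π x) n).ncard = (hatClsOfOrder x n).ncard := by
  obtain ⟨w, hw, hmin⟩ := Set.exists_min_image _ orderOf (Set.toFinite _) habove
  set p := orderOf x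
  set r := orderOf w / p
  have hr : r.Prime := prime_orderOf_div_of_minimal hw hmin
  have hwpr : orderOf w = p * r :=
    (Nat.mul_div_cancel' (orderOf_dvd_of_mem_zpowers (zpowers_le.mp hw.le))).symm
  have hw1 : (below w).ncard ≠ 1 := by
    rw [Ne, ncard_below_eq_one_iff, hwpr]
    exact Nat.not_prime_mul hx.ne_one hr.ne_one
  have hπw : orderOf (π w) = p * r := by rw [orderOf_apply hπ hw1, hwpr]
  have hπx : (orderOf (π x)).Prime := by
    rw [← ncard_below_eq_one_iff, ncard_below_apply hπ, ncard_below_eq_one_iff]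
    exact hx
  have hπw_above : π w ∈ above (π x) := image_above hπ x ▸ Set.mem_image_of_mem π hw
  have hC y := orderOf_eq_or_of_simEq (y := y) hx hw hx hr hwpr
  have hC' y := orderOf_eq_or_of_simEq (y := y) hπx hπw_above hx hr hπw
  rcases eq_or_ne p r with hpr | hpr
  · have hπxp : orderOf (π x) = p := (hC' (π x) (simEq.refl _)).elim id (·.trans hpr.symm)
    rw [hatClsOfOrder_eq_ite (fun y hy => (hC y hy).elim id (·.trans hpr.symm)),
      hatClsOfOrder_eq_ite (fun y hy => hπxp ▸ (hC' y hy).elim id (·.trans hpr.symm)), hπxp]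
    split_ifs
    exacts [ncard_hatCls_apply hπ x, rfl]
  · exact ncard_hatClsOfOrder_eq_of_ncard_hatCls_eq hx hr hpr habove ⟨π w, hπw_above⟩ rfl hC hC'
      (ncard_hatCls_apply hπ x) n

theorem ncard_hatClsOfOrder_apply (hπ : π ∈ DRPAut G) (x : G) (n : ℕ) :
    (hatClsOfOrder (π x) n).ncard = (hatClsOfOrder x n).ncard := by
  by_cases hd : (below x).ncard = 1
  · have hx := ncard_below_eq_one_iff.mp hd
    have hπx : (orderOf (π x)).Prime := by
      rw [← ncard_below_eq_one_iff, ncard_below_apply hπ, hd]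
    rcases (above x).eq_empty_or_nonempty with habove | habove
    · have hsim : simEq G (π x) x := simEq_iff.mpr
        ⟨by rw [below_eq_singleton_one hx, below_eq_singleton_one hπx],
          by rw [← image_above hπ, habove, Set.image_empty]⟩
      have : hatClsOfOrder (π x) n = hatClsOfOrder x n :=
        Set.ext fun y => and_congr_left' ⟨fun h => h.trans hsim, fun h => h.trans hsim.symm⟩
      rw [this]
    · exact ncard_hatClsOfOrder_apply_of_prime hπ hx habove n
  · have hd' : (below (π x)).ncard ≠ 1 := by rwa [ncard_below_apply hπ]
    rw [hatClsOfOrder_eq_ite (fun y hy => orderOf_eq_of_simEq hd hy),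
      hatClsOfOrder_eq_ite (fun y hy => orderOf_eq_of_simEq hd' hy), orderOf_apply hπ hd]
    split_ifs
    exacts [ncard_hatCls_apply hπ x, rfl]

theorem card_fiber_hatCls_apply (hπ : π ∈ DRPAut G) (b : Set G × ℕ) :
    Nat.card {x // (hatCls G (π x), orderOf x) = b} =
      Nat.card {y // (hatCls G y, orderOf y) = b} := by
  obtain ⟨S, n⟩ := b
  by_cases hS : ∃ z, hatCls G (π z) = S
  · obtain ⟨z, rfl⟩ := hS
    calc _ = (hatClsOfOrder z n).ncard := by
          rw [← Nat.card_coe_set_eq]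
          refine Nat.card_congr (Equiv.subtypeEquivRight fun x => ?_)
          simp only [Prod.mk.injEq, hatCls_eq_iff, simEq_apply_iff hπ]
          rfl
      _ = (hatClsOfOrder (π z) n).ncard := (ncard_hatClsOfOrder_apply hπ z n).symm
      _ = _ := by
          rw [← Nat.card_coe_set_eq]
          refine Nat.card_congr (Equiv.subtypeEquivRight fun y => ?_)
          simp only [Prod.mk.injEq, hatCls_eq_iff]
          rfl
  · have hS' (y : G) : hatCls G y ≠ S := fun h => hS ⟨π.symm y, by simpa using h⟩
    exact (Nat.card_eq_zero.mpr (Or.inl ((isEmpty_subtype _).mpr fun x hx =>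
      hS ⟨x, congrArg Prod.fst hx⟩))).trans (Nat.card_eq_zero.mpr (Or.inl
        ((isEmpty_subtype _).mpr fun y hy => hS' y (congrArg Prod.fst hy)))).symm

theorem exists_perm_simEq_apply (hπ : π ∈ DRPAut G) :
    ∃ σ : Equiv.Perm G, ∀ x, simEq G (σ x) (π x) ∧ orderOf (σ x) = orderOf x ∧
      σ '' genCls G x = genCls G (σ x) := by
  have hclass (x : G) : Nat.card {y // zpowers y = zpowers x} = (orderOf x).totient :=
    (Nat.card_coe_set_eq (genCls G x)).trans (ncard_genCls x)
  obtain ⟨σ, hσ⟩ := Setoid.exists_perm_of_card_fiber_eq (r := Setoid.ker zpowers)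
    (f := fun x => (hatCls G (π x), orderOf x)) (g := fun y => (hatCls G y, orderOf y))
    (fun b => b.2.totient)
    (fun x y h => Prod.ext (hatCls_eq_iff.mpr ((simEq_apply_iff hπ).mpr (simEq_of_zpowers_eq h)))
      (mem_genCls_iff.mp h).2)
    (fun x y h => Prod.ext (hatCls_eq_iff.mpr (simEq_of_zpowers_eq h)) (mem_genCls_iff.mp h).2)
    hclass hclass (card_fiber_hatCls_apply hπ)
  refine ⟨σ, fun x => ⟨hatCls_eq_iff.mp (congrArg Prod.fst (hσ x x).1),
    congrArg Prod.snd (hσ x x).1, ?_⟩⟩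
  ext z
  obtain ⟨y, rfl⟩ := σ.surjective z
  rw [σ.injective.mem_set_image]
  exact (hσ x y).2.symm

end Automorphism

end FiniteGroup

theorem mem_DRPAut_of_fixesClasses {τ : Equiv.Perm G} (hτ : FixesClasses G τ) :
    τ ∈ DRPAut G := fun x y => by
  change τ y ∈ below (τ x) ↔ x ∈ above y
  rw [(simEq_iff.mp (hτ x)).1, ← (simEq_iff.mp (hτ y)).2]
  rfl

theorem mem_DRPAut_of_isPPerm {σ : Equiv.Perm G} (hσ : IsPPerm G σ) : σ ∈ DRPAut G :=
  fun x y => by simp only [rpArc, lt_iff_le_not_ge, ← hσ.2.2]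

theorem isPPerm_of_mem_DRPAut {σ : Equiv.Perm G} (hσ : σ ∈ DRPAut G)
    (horder : ∀ x, orderOf (σ x) = orderOf x) (hgen : ∀ x, σ '' genCls G x = genCls G (σ x)) :
    IsPPerm G σ := by
  refine ⟨horder, hgen, fun x y => ?_⟩
  have heq : zpowers y = zpowers x ↔ zpowers (σ y) = zpowers (σ x) := by
    change y ∈ genCls G x ↔ σ y ∈ genCls G (σ x)
    rw [← hgen, σ.injective.mem_set_image]
  rw [le_iff_lt_or_eq, le_iff_lt_or_eq, heq]
  exact or_congr_left (hσ x y).symm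

end ReducedPowerGraph

open ReducedPowerGraph

/-- `Aut(→RP(G)) = (∏ Sᵤ̂ᵢ) · P(G)`: a permutation of a finite group `G` is an
automorphism of the directed reduced power graph iff it is a product `τ · σ` where `τ` fixes
every `≃`-class setwise and `σ` is a `P(G)`-permutation. -/
theorem aut_DRP_eq_prod {G : Type*} [Group G] [Fintype G] (π : Equiv.Perm G) :
    π ∈ DRPAut G ↔
      ∃ τ σ : Equiv.Perm G, FixesClasses G τ ∧ IsPPerm G σ ∧ π = τ * σ := by
  constructor
  · intro hπ
    obtain ⟨σ, hσ⟩ := exists_perm_simEq_apply hπ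
    have hτ : FixesClasses G (π * σ⁻¹) := fun x => by
      simpa using (hσ (σ⁻¹ x)).1.symm
    have hσ_mem : σ ∈ DRPAut G := by
      simpa using mul_mem (inv_mem (mem_DRPAut_of_fixesClasses hτ)) hπ
    exact ⟨π * σ⁻¹, σ, hτ,
      isPPerm_of_mem_DRPAut hσ_mem (fun x => (hσ x).2.1) (fun x => (hσ x).2.2), by group⟩
  · rintro ⟨τ, σ, hτ, hσ, rfl⟩
    exact mul_mem (mem_DRPAut_of_fixesClasses hτ) (mem_DRPAut_of_isPPerm hσ)
end

section
/- Let G be a finite group that is not isomorphic to the cyclic group Z_{2^m} for any m ≥ 1 and not isomorphic to the generalized quaternion group Q_{2^α} of order 2^α for any α ≥ 3. Then every automorphism of the reduced power graph RP(G) fixes the identity element e of G. -/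
open Subgroup Set

variable (G : Type*) [Group G]

/-!
If `π 1 = a ≠ 1`, then `a` is adjacent to every other vertex of `RP(G)`. As `⟨a⁻¹⟩ = ⟨a⟩`, this
forces `a² = 1`, and then `a` lies in every nontrivial cyclic subgroup, so `G` is a `2`-group whose
only involution is `a`. Such a group is cyclic or generalized quaternion.

For the classification, let `x` have maximal order `2 ^ m`; every involution lies in `⟨x⟩`. Then
`⟨x⟩` is self-centralizing: if `c` commutes with `x` and `c² = x ^ k`, either `k` is odd and
`x ∈ ⟨c⟩`, or `c x ^ (-k/2)` is an involution. Computing modulo `2 ^ m`, an element `g ∉ ⟨x⟩`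
normalizing `⟨x⟩` with `g² ∈ ⟨x⟩` inverts `x` and squares to the involution `x ^ 2 ^ (m - 1)`;
since `-1` is not a square modulo `4`, the whole normalizer squares into `⟨x⟩`. The normalizer
condition of nilpotent groups (for `m = 2`, the fact that all squares lie in `⟨x⟩`) makes `⟨x⟩`
normal, so `G = ⟨x⟩ ∪ g⟨x⟩` is the generalized quaternion group of order `2 ^ (m + 1)`.
-/

/-- `k` and `c` are the exponents in `g x g⁻¹ = x ^ k`, `g² = x ^ c` for some `g` normalizing a
cyclic group `⟨x⟩` of order `2 ^ m`: `g²` centralizes `x`, `g` does not, `g` centralizes `g²`,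
and no `g x ^ t` is an involution. -/
theorem Int.quaternion_exponents {m : ℕ} {k c : ℤ} (hk : 2 ^ m ∣ (k - 1) * (k + 1))
    (hk1 : ¬ 2 ^ m ∣ k - 1) (hc : 2 ^ m ∣ c * (k - 1)) (ht : ∀ t, ¬ 2 ^ m ∣ c + (k + 1) * t) :
    2 ^ m ∣ k + 1 ∧ 2 ^ m ∣ c - 2 ^ (m - 1) := by
  obtain _ | n := m
  · exact absurd (one_dvd _) hk1
  have h2n : (2 : ℤ) ^ n ≠ 0 := by positivity
  have cancel_odd {u : ℤ} (hu : Odd u) {v : ℤ} (h : 2 ^ n ∣ v * u) : 2 ^ n ∣ v :=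
    ((Int.isCoprime_two_left.mpr hu).pow_left).dvd_of_dvd_mul_right h
  obtain ⟨j, rfl⟩ : Odd k := by
    by_contra hk_even
    rw [Int.not_odd_iff_even] at hk_even
    have hodd : Odd ((k - 1) * (k + 1)) := (hk_even.sub_odd odd_one).mul hk_even.add_one
    exact Int.not_even_iff_odd.mpr hodd
      (even_iff_two_dvd.mpr (dvd_trans (dvd_pow_self 2 n.succ_ne_zero) hk))
  rw [pow_succ, Nat.add_sub_cancel] at *
  rw [show 2 * j + 1 - 1 = j * 2 by ring] at hk hk1 hc
  rw [show 2 * j + 1 + 1 = (j + 1) * 2 by ring] at hk ht ⊢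
  rcases Int.even_or_odd j with hj | hj
  · exfalso
    have hkm1 : 2 ^ n ∣ j * 2 := cancel_odd hj.add_one <| by
      rw [show j * 2 * ((j + 1) * 2) = j * 2 * (j + 1) * 2 by ring] at hk
      exact (mul_dvd_mul_iff_right two_ne_zero).mp hk
    obtain ⟨d, hd⟩ := hkm1
    have hd_odd : Odd d := by
      rw [← Int.not_even_iff_odd]
      rintro ⟨e, rfl⟩
      exact hk1 ⟨e, by rw [hd]; ring⟩
    obtain ⟨c', rfl⟩ : 2 ∣ c := by
      refine (Int.isCoprime_two_left.mpr hd_odd).dvd_of_dvd_mul_right ?_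
      rw [hd, show c * (2 ^ n * d) = 2 ^ n * (c * d) by ring] at hc
      exact (mul_dvd_mul_iff_left h2n).mp hc
    obtain ⟨u, v, huv⟩ : IsCoprime (j + 1) (2 ^ n) :=
      (Int.isCoprime_two_left.mpr hj.add_one).pow_left.symm
    exact ht (-c' * u) ⟨c' * v, by linear_combination (-2 * c') * huv⟩
  · obtain ⟨e, rfl⟩ : 2 ^ n ∣ c := cancel_odd hj <| by
      rw [show c * (j * 2) = c * j * 2 by ring] at hc
      exact (mul_dvd_mul_iff_right two_ne_zero).mp hc
    obtain ⟨d, hd⟩ : 2 ^ n ∣ (j + 1) * 2 := cancel_odd hj <| by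
      rw [show j * 2 * ((j + 1) * 2) = (j + 1) * 2 * j * 2 by ring] at hk
      exact (mul_dvd_mul_iff_right two_ne_zero).mp hk
    obtain ⟨e', rfl⟩ : Odd e := by
      rw [← Int.not_even_iff_odd]
      rintro ⟨e', rfl⟩
      exact ht 0 ⟨e', by ring⟩
    refine ⟨?_, e', by ring⟩
    rw [hd]
    by_contra hnd
    obtain ⟨d', rfl⟩ : Odd d := by
      rw [← Int.not_even_iff_odd]
      rintro ⟨d', rfl⟩
      exact hnd ⟨d', by ring⟩
    exact ht 1 ⟨e' + d' + 1, by rw [hd]; ring⟩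

section

variable {G}

theorem sq_induction {P : G → Prop} (one : P 1) (of_sq : ∀ c, P (c ^ 2) → P c) {c : G} {k : ℕ}
    (hc : c ^ 2 ^ k = 1) : P c := by
  induction k generalizing c with
  | zero => rw [pow_zero, pow_one] at hc; rwa [hc]
  | succ k ih => exact of_sq c (ih (by rwa [← pow_mul, ← pow_succ']))

theorem eq_one_or_eq_of_mem_zpowers {t y : G} (ht : t ^ 2 = 1) (hy : y ∈ zpowers t) :
    y = 1 ∨ y = t := by
  obtain ⟨k, rfl⟩ := mem_zpowers_iff.mp hy
  rw [zpow_eq_zpow_emod' k ht]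
  rcases Int.emod_two_eq_zero_or_one k with h | h <;> simp [h]

theorem zpowers_eq_of_le_of_orderOf_le [Finite G] {x y : G} (hle : zpowers x ≤ zpowers y)
    (hord : orderOf y ≤ orderOf x) : zpowers x = zpowers y :=
  eq_of_le_of_card_ge hle (by rwa [Nat.card_zpowers, Nat.card_zpowers])

theorem mem_normalizer_zpowers_of_conj_mem [Finite G] {x g : G}
    (h : g * x * g⁻¹ ∈ zpowers x) : g ∈ normalizer (zpowers x : Set G) := by
  rw [mem_normalizer_iff_map_conj_eq, MonoidHom.map_zpowers]
  exact zpowers_eq_of_le_of_orderOf_le (zpowers_le.mpr h) (MulEquiv.orderOf_eq _ x).ge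

open QuaternionGroup in
theorem nonempty_mulEquiv_quaternionGroup {n : ℕ} [NeZero n] {x g : G} (hx : orderOf x = 2 * n)
    (hgx : g * x * g⁻¹ = x⁻¹) (hg2 : g ^ 2 = x ^ n) (hgA : g ∉ zpowers x)
    (hcover : ∀ y ∉ zpowers x, g⁻¹ * y ∈ zpowers x) : Nonempty (G ≃* QuaternionGroup n) := by
  have hpow (s t : ℤ) : x ^ s = x ^ t ↔ (s : ZMod (2 * n)) = t := by
    rw [zpow_eq_zpow_iff_modEq, hx, ZMod.intCast_eq_intCast_iff]
  have hconj (s : ℤ) : g⁻¹ * x ^ s * g = x ^ (-s) := by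
    have hx' : g⁻¹ * x * g = x⁻¹ :=
      calc g⁻¹ * x * g = g⁻¹ * (g * x * g⁻¹)⁻¹ * g := by rw [hgx, inv_inv]
        _ = x⁻¹ := by group
    simpa [hx', zpow_neg] using (conj_zpow (a := g⁻¹) (b := x) (i := s)).symm
  let ψ : ZMod (2 * n) → G := fun i => x ^ (i.val : ℤ)
  have hψ {i : ZMod (2 * n)} {s : ℤ} (h : (s : ZMod (2 * n)) = i) : ψ i = x ^ s :=
    (hpow _ _).mpr (by simp [h])
  let f : QuaternionGroup n → G
    | a i => ψ i
    | xa i => g * ψ i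
  have hf : ∀ p q, f (p * q) = f p * f q := by
    rintro (i | i) (j | j)
    · simp only [a_mul_a, f]
      rw [hψ (s := i.val + j.val) (by simp), zpow_add]
    · simp only [a_mul_xa, f]
      rw [hψ (s := -i.val + j.val) (by simp; ring), zpow_add, ← hconj]
      group
      rfl
    · simp only [xa_mul_a, f]
      rw [hψ (s := i.val + j.val) (by simp), zpow_add, mul_assoc]
    · simp only [xa_mul_xa, f]
      rw [hψ (s := n + -i.val + j.val) (by simp; ring), zpow_add, zpow_add, ← hconj,
        zpow_natCast, ← hg2]
      group
      rfl
  have hψ_mem (i : ZMod (2 * n)) : ψ i ∈ zpowers x := zpow_mem (mem_zpowers x) _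
  have hinj : Function.Injective f := by
    have hψ_inj {i j : ZMod (2 * n)} (h : ψ i = ψ j) : i = j := by simpa using (hpow _ _).mp h
    rintro (i | i) (j | j) h
    · exact congrArg a (hψ_inj h)
    · exact (hgA (eq_mul_inv_of_mul_eq h.symm ▸ mul_mem (hψ_mem i) (inv_mem (hψ_mem j)))).elim
    · exact (hgA (eq_mul_inv_of_mul_eq h ▸ mul_mem (hψ_mem j) (inv_mem (hψ_mem i)))).elim
    · exact congrArg xa (hψ_inj (mul_left_cancel h))
  have hsurj : Function.Surjective f := by
    intro y
    by_cases hy : y ∈ zpowers x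
    · obtain ⟨s, rfl⟩ := mem_zpowers_iff.mp hy
      exact ⟨a s, hψ rfl⟩
    · obtain ⟨s, hs⟩ := mem_zpowers_iff.mp (hcover y hy)
      exact ⟨xa s, show g * ψ s = y by rw [hψ rfl, hs, mul_inv_cancel_left]⟩
  exact ⟨(MulEquiv.ofBijective (MonoidHom.mk' f hf) ⟨hinj, hsurj⟩).symm⟩

section MaximalCyclic

variable [Finite G] {x : G} {m : ℕ} (hx : orderOf x = 2 ^ m) (hexp : ∀ y : G, y ^ 2 ^ m = 1)
  (hinv : ∀ t : G, t ^ 2 = 1 → t ∈ zpowers x)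
include hx hexp hinv

theorem mem_zpowers_of_commute {c : G} (hc : Commute c x) : c ∈ zpowers x := by
  revert hc
  refine sq_induction (P := fun c => Commute c x → c ∈ zpowers x) (fun _ => one_mem _)
    (fun c ih hc => ?_) (hexp c)
  obtain ⟨k, hk⟩ := mem_zpowers_iff.mp (ih (hc.pow_left 2))
  rcases Int.even_or_odd k with ⟨l, rfl⟩ | hk_odd
  · have hinvol : (c * x ^ (-l)) ^ 2 = 1 := by
      rw [(hc.zpow_right _).mul_pow, ← hk, ← zpow_natCast, ← zpow_mul, ← zpow_add]
      convert zpow_zero x using 2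
      push_cast; ring
    simpa using mul_mem (hinv _ hinvol) (zpow_mem (mem_zpowers x) l)
  · obtain ⟨u, v, huv⟩ : IsCoprime k (2 ^ m) :=
      (Int.isCoprime_two_left.mpr hk_odd).pow_left.symm
    have hx_mem : x ∈ zpowers c := by
      have hxm : x ^ ((2 : ℤ) ^ m) = 1 := by exact_mod_cast hexp x
      have : x = (c ^ 2) ^ u :=
        calc x = x ^ (u * k + v * 2 ^ m) := by rw [huv, zpow_one]
          _ = (x ^ k) ^ u * (x ^ ((2 : ℤ) ^ m)) ^ v := by
            rw [← zpow_mul, ← zpow_mul, ← zpow_add, mul_comm k u, mul_comm _ v]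
          _ = (c ^ 2) ^ u := by rw [hk, hxm, one_zpow, mul_one]
      exact this ▸ zpow_mem (pow_mem (mem_zpowers c) 2) u
    have hle : orderOf c ≤ orderOf x :=
      hx ▸ Nat.le_of_dvd (by positivity) (orderOf_dvd_of_pow_eq_one (hexp c))
    rw [zpowers_eq_of_le_of_orderOf_le (zpowers_le.mpr hx_mem) hle]
    exact mem_zpowers c

theorem conj_eq_inv_and_sq_eq_of_sq_mem {g : G} (hgA : g ∉ zpowers x) (hg2 : g ^ 2 ∈ zpowers x)
    (hgx : g * x * g⁻¹ ∈ zpowers x) : g * x * g⁻¹ = x⁻¹ ∧ g ^ 2 = x ^ 2 ^ (m - 1) := by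
  obtain ⟨k, hk⟩ := mem_zpowers_iff.mp hgx
  obtain ⟨c, hc⟩ := mem_zpowers_iff.mp hg2
  have hpow (i j : ℤ) : x ^ i = x ^ j ↔ (2 : ℤ) ^ m ∣ j - i := by
    rw [zpow_eq_zpow_iff_modEq, hx, Int.modEq_iff_dvd]; push_cast; rfl
  have hconj (j : ℤ) : g * x ^ j * g⁻¹ = x ^ (k * j) := by rw [← conj_zpow, ← hk, ← zpow_mul]
  have hk2 : (2 : ℤ) ^ m ∣ (k - 1) * (k + 1) := by
    have : x ^ (1 : ℤ) = x ^ (k * k) := by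
      rw [← hconj, hk, zpow_one, show g * (g * x * g⁻¹) * g⁻¹ = g ^ 2 * x * (g ^ 2)⁻¹ by
        rw [sq]; group, ← hc]
      group
    rwa [hpow, show k * k - 1 = (k - 1) * (k + 1) by ring] at this
  have hk1 : ¬ (2 : ℤ) ^ m ∣ k - 1 := by
    rw [← hpow, zpow_one, hk, eq_comm, mul_inv_eq_iff_eq_mul]
    exact fun hcomm => hgA (mem_zpowers_of_commute hx hexp hinv hcomm)
  have hck : (2 : ℤ) ^ m ∣ c * (k - 1) := by
    have : x ^ c = x ^ (k * c) := by
      rw [← hconj, hc, show g * g ^ 2 * g⁻¹ = g ^ 2 by group]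
    rwa [hpow, show k * c - c = c * (k - 1) by ring] at this
  have ht (t : ℤ) : ¬ (2 : ℤ) ^ m ∣ c + (k + 1) * t := by
    rw [← sub_zero (c + (k + 1) * t), ← hpow, zpow_zero]
    intro h1
    have hsq : (g * x ^ t) ^ 2 = x ^ (c + (k + 1) * t) := by
      rw [show (g * x ^ t) ^ 2 = g * x ^ t * g⁻¹ * g ^ 2 * x ^ t by rw [sq, sq]; group, hconj,
        ← hc, ← zpow_add, ← zpow_add]
      ring_nf
    refine hgA ?_
    simpa using mul_mem (hinv _ (hsq.trans h1.symm)) (zpow_mem (mem_zpowers x) (-t))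
  obtain ⟨hk', hc'⟩ := Int.quaternion_exponents hk2 hk1 hck ht
  constructor
  · rw [← hk, ← zpow_neg_one, hpow]
    rwa [show -1 - k = -(k + 1) by ring, dvd_neg]
  · rw [← hc, ← zpow_natCast, hpow]
    rw [← dvd_neg, neg_sub]
    exact_mod_cast hc'

theorem sq_mem_of_mem_normalizer (hm : 2 ≤ m) {w : G} (hw : w ∈ normalizer (zpowers x : Set G)) :
    w ^ 2 ∈ zpowers x := by
  revert hw
  refine sq_induction (P := fun w => w ∈ normalizer (zpowers x : Set G) → w ^ 2 ∈ zpowers x)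
    (fun _ => by simp) (fun v ih hv => ?_) (hexp w)
  by_contra hv2
  have hv2N : v ^ 2 ∈ normalizer (zpowers x : Set G) := pow_mem hv 2
  have hinverts := (conj_eq_inv_and_sq_eq_of_sq_mem hx hexp hinv hv2 (ih hv2N)
    ((mem_normalizer_iff.mp hv2N x).mp (mem_zpowers x))).1
  obtain ⟨s, hs⟩ := mem_zpowers_iff.mp ((mem_normalizer_iff.mp hv x).mp (mem_zpowers x))
  -- `x ↦ x ^ s` squares to inversion of `ℤ/2^m`, but `-1` is not a square modulo `4`
  have hss : x ^ (s * s + 1) = 1 := by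
    rw [zpow_add_one, zpow_mul, hs, conj_zpow, hs,
      show v * (v * x * v⁻¹) * v⁻¹ = v ^ 2 * x * (v ^ 2)⁻¹ by rw [sq]; group, hinverts,
      inv_mul_cancel]
  have h4 : ((s * s + 1 : ℤ) : ZMod 4) = 0 := by
    rw [ZMod.intCast_zmod_eq_zero_iff_dvd]
    have := orderOf_dvd_iff_zpow_eq_one.mpr hss
    rw [hx] at this
    exact (Int.natCast_dvd_natCast.mpr (pow_dvd_pow 2 hm)).trans this
  push_cast at h4
  generalize (s : ZMod 4) = z at h4
  revert z; decide

theorem conj_eq_inv_and_sq_eq_of_mem_normalizer (hm : 2 ≤ m) {w : G}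
    (hw : w ∈ normalizer (zpowers x : Set G)) (hwA : w ∉ zpowers x) :
    w * x * w⁻¹ = x⁻¹ ∧ w ^ 2 = x ^ 2 ^ (m - 1) :=
  conj_eq_inv_and_sq_eq_of_sq_mem hx hexp hinv hwA (sq_mem_of_mem_normalizer hx hexp hinv hm hw)
    ((mem_normalizer_iff.mp hw x).mp (mem_zpowers x))

theorem normalizer_zpowers_eq_top (hG : IsPGroup 2 G) (hm : 2 ≤ m) :
    normalizer (zpowers x : Set G) = ⊤ := by
  rcases hm.eq_or_lt with rfl | hm3
  · have hsq (y : G) : y ^ 2 ∈ zpowers x := hinv _ (by rw [← pow_mul]; exact hexp y)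
    refine (eq_top_iff' _).mpr fun y => mem_normalizer_zpowers_of_conj_mem ?_
    rw [show y * x * y⁻¹ = x⁻¹ * (x * y) ^ 2 * (y ^ 2)⁻¹ by rw [sq, sq]; group]
    exact mul_mem (mul_mem (inv_mem (mem_zpowers x)) (hsq _)) (inv_mem (hsq y))
  by_contra hN
  obtain ⟨w, hwNN, hwN⟩ := SetLike.exists_of_lt <|
    Group.normalizerCondition_of_isNilpotent (h := hG.isNilpotent) _ (lt_top_iff_ne_top.mpr hN)
  have hx'N := (mem_normalizer_iff.mp hwNN x).mp (le_normalizer (mem_zpowers x))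
  by_cases hx'A : w * x * w⁻¹ ∈ zpowers x
  · exact hwN (mem_normalizer_zpowers_of_conj_mem hx'A)
  have hx4 : x ^ 4 = 1 := by
    rw [← conj_eq_one_iff (a := w), ← conj_pow, show 4 = 2 * 2 from rfl, pow_mul,
      (conj_eq_inv_and_sq_eq_of_mem_normalizer hx hexp hinv (by omega) hx'N hx'A).2, ← pow_mul,
      ← pow_succ, Nat.sub_add_cancel (by omega), hexp]
  have := hx ▸ orderOf_dvd_of_pow_eq_one hx4
  rw [show 4 = 2 ^ 2 from rfl, Nat.pow_dvd_pow_iff_le_right (by norm_num)] at this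
  omega

end MaximalCyclic

theorem IsPGroup.isCyclic_or_nonempty_mulEquiv_quaternionGroup [Finite G] (hG : IsPGroup 2 G)
    {a : G} (hu : ∀ t : G, t ^ 2 = 1 → t = 1 ∨ t = a) :
    IsCyclic G ∨ ∃ α : ℕ, 3 ≤ α ∧ Nonempty (G ≃* QuaternionGroup (2 ^ (α - 2))) := by
  by_cases hcyc : IsCyclic G
  · exact Or.inl hcyc
  right
  obtain ⟨x, hmax⟩ := Finite.exists_max (orderOf : G → ℕ)
  obtain ⟨m, hx⟩ := IsPGroup.iff_orderOf.mp hG x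
  have hexp (y : G) : y ^ 2 ^ m = 1 := by
    obtain ⟨k, hk⟩ := IsPGroup.iff_orderOf.mp hG y
    rw [← orderOf_dvd_iff_pow_eq_one, hk]
    exact Nat.pow_dvd_pow 2 ((Nat.pow_le_pow_iff_right (by norm_num)).mp (hk ▸ hx ▸ hmax y))
  have hinv (t : G) (ht : t ^ 2 = 1) : t ∈ zpowers x := by
    by_cases ht1 : t = 1
    · exact ht1 ▸ one_mem _
    have hm : 1 ≤ m := by
      have := hx ▸ orderOf_eq_prime ht ht1 ▸ hmax t
      exact Nat.one_le_iff_ne_zero.mpr (by rintro rfl; simp at this)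
    have hxa : x ^ 2 ^ (m - 1) = t := by
      have hsq : (x ^ 2 ^ (m - 1)) ^ 2 = 1 := by
        rw [← pow_mul, ← pow_succ, Nat.sub_add_cancel hm, hexp]
      have hne : x ^ 2 ^ (m - 1) ≠ 1 := by
        rw [Ne, ← orderOf_dvd_iff_pow_eq_one, hx, Nat.pow_dvd_pow_iff_le_right (by norm_num)]
        omega
      rw [(hu _ hsq).resolve_left hne, (hu t ht).resolve_left ht1]
    exact hxa ▸ pow_mem (mem_zpowers x) _
  have hm : 2 ≤ m := by
    by_contra! hm
    refine hcyc ⟨x, fun y => hinv y ?_⟩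
    rw [← orderOf_dvd_iff_pow_eq_one]
    exact (orderOf_dvd_of_pow_eq_one (hexp y)).trans
      (by simpa using Nat.pow_dvd_pow 2 (show m ≤ 1 by omega))
  have hN := normalizer_zpowers_eq_top hx hexp hinv hG hm
  have hloc {y : G} (hy : y ∉ zpowers x) :=
    conj_eq_inv_and_sq_eq_of_mem_normalizer hx hexp hinv hm (hN ▸ mem_top y) hy
  obtain ⟨g, hg⟩ : ∃ g, g ∉ zpowers x := by
    by_contra! h
    exact hcyc ⟨x, h⟩
  refine ⟨m + 1, by omega, ?_⟩
  have : NeZero (2 ^ (m + 1 - 2)) := ⟨by positivity⟩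
  refine nonempty_mulEquiv_quaternionGroup (hx.trans ?_) (hloc hg).1 (hloc hg).2 hg
    fun y hy => mem_zpowers_of_commute hx hexp hinv (mul_inv_eq_iff_eq_mul.mp ?_)
  · rw [← pow_succ']; congr 1; omega
  calc g⁻¹ * y * x * (g⁻¹ * y)⁻¹ = g⁻¹ * (y * x * y⁻¹) * g := by group
    _ = x := by rw [(hloc hy).1, ← (hloc hg).1]; group

theorem isPGroup_two_of_forall_mem_zpowers [Finite G] {a : G} (ha1 : a ≠ 1) (ha2 : a ^ 2 = 1)
    (ha : ∀ y, y ≠ 1 → a ∈ zpowers y) : IsPGroup 2 G := by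
  have hord : orderOf a = 2 := orderOf_eq_prime ha2 ha1
  refine IsPGroup.of_card
    (Nat.eq_prime_pow_of_unique_prime_dvd Nat.card_pos.ne' fun {q} hq hdvd => ?_)
  have := Fact.mk hq
  obtain ⟨y, hy⟩ := exists_prime_orderOf_dvd_card' q hdvd
  have hy1 : y ≠ 1 := by rintro rfl; exact hq.ne_one (hy ▸ orderOf_one)
  have h2q : 2 ∣ q := hord ▸ hy ▸ orderOf_dvd_of_mem_zpowers (ha y hy1)
  exact ((Nat.prime_dvd_prime_iff_eq Nat.prime_two hq).mp h2q).symm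

theorem eq_one_or_eq_of_sq_eq_one {a : G} (ha1 : a ≠ 1) (ha : ∀ y, y ≠ 1 → a ∈ zpowers y)
    {t : G} (ht : t ^ 2 = 1) : t = 1 ∨ t = a :=
  or_iff_not_imp_left.mpr fun ht1 =>
    ((eq_one_or_eq_of_mem_zpowers ht (ha t ht1)).resolve_left ha1).symm

theorem rpAdj_one_left {y : G} (hy : y ≠ 1) : rpAdj G 1 y :=
  Or.inl (by rwa [zpowers_one_eq_bot, bot_lt_iff_ne_bot, Ne, zpowers_eq_bot])

theorem not_rpAdj_of_zpowers_eq {x y : G} (h : zpowers x = zpowers y) : ¬ rpAdj G x y := by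
  rintro (hlt | hlt) <;> exact hlt.ne (by rw [h])

theorem rpAdj_apply_one {π : Equiv.Perm G} (hπ : π ∈ RPAut G) {w : G} (hw : w ≠ π 1) :
    rpAdj G (π 1) w := by
  have hw' : π.symm w ≠ 1 := by rintro h; exact hw (by rw [← h, Equiv.apply_symm_apply])
  simpa using (hπ 1 (π.symm w)).mpr (rpAdj_one_left hw')

section Dominating

variable {a : G} (ha : ∀ w, w ≠ a → rpAdj G a w)
include ha

theorem sq_eq_one_of_forall_rpAdj : a ^ 2 = 1 := by
  by_contra h
  refine not_rpAdj_of_zpowers_eq zpowers_inv.symm (ha a⁻¹ fun h' => h ?_)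
  rw [sq, ← inv_eq_iff_mul_eq_one, h']

theorem mem_zpowers_of_forall_rpAdj {y : G} (hy : y ≠ 1) : a ∈ zpowers y := by
  by_cases hya : y = a
  · exact hya ▸ mem_zpowers y
  rcases ha y hya with hlt | hlt
  · exact hlt.le (mem_zpowers a)
  · rcases eq_one_or_eq_of_mem_zpowers (sq_eq_one_of_forall_rpAdj ha) (hlt.le (mem_zpowers y))
      with h | h
    exacts [absurd h hy, absurd h hya]

end Dominating

end

/-- if the finite group `G` is not cyclic of order `2^m` (`m ≥ 1`) and not
generalized quaternion of order `2^α` (`α ≥ 3`), then every automorphism of `RP(G)` fixes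
the identity element. -/
theorem aut_RP_fixes_one {G : Type*} [Group G] [Fintype G]
    (h1 : ¬ (IsCyclic G ∧ ∃ m : ℕ, 1 ≤ m ∧ Fintype.card G = 2 ^ m))
    (h2 : ¬ ∃ α : ℕ, 3 ≤ α ∧ Nonempty (G ≃* QuaternionGroup (2 ^ (α - 2))))
    (π : Equiv.Perm G) (hπ : π ∈ RPAut G) :
    π 1 = 1 := by
  by_contra hne
  have hdom (w : G) (hw : w ≠ π 1) : rpAdj G (π 1) w := rpAdj_apply_one hπ hw
  have ha (y : G) (hy : y ≠ 1) : π 1 ∈ zpowers y := mem_zpowers_of_forall_rpAdj hdom hy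
  have hG := isPGroup_two_of_forall_mem_zpowers hne (sq_eq_one_of_forall_rpAdj hdom) ha
  rcases hG.isCyclic_or_nonempty_mulEquiv_quaternionGroup
    (fun _ => eq_one_or_eq_of_sq_eq_one hne ha) with hcyc | hQ
  · obtain ⟨n, hn⟩ := IsPGroup.iff_card.mp hG
    have : 1 < Nat.card G := Finite.one_lt_card_iff_nontrivial.mpr ⟨π 1, 1, hne⟩
    refine h1 ⟨hcyc, n, ?_, by rw [← Nat.card_eq_fintype_card, hn]⟩
    rw [hn, Nat.one_lt_two_pow_iff] at this
    omega
  · exact h2 hQ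
end

section
/- Let G be a finite group, x ∈ G, and π an automorphism of the directed reduced power graph →RP(G). If the ≃-class x̂ is of Type III, then the ≃-class of x^π equals x̂ (i.e., π fixes this ≃-class setwise). -/
open Subgroup Set

variable (G : Type*) [Group G]

/-
Proof. Every nonidentity vertex has an arc to `1`, while `1` has no outgoing arc, so a
`→RP(G)`-automorphism fixes `1`; it also preserves adjacency in `RP(G)`. If `⟨x⟩` is a maximal
cyclic subgroup of prime order, the only neighbour of `x` in `RP(G)` is `1`; hence the only
neighbour of `x^π` is `1^π = 1`, so `x^π ≃ x`.
-/

section ReducedPowerGraph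

variable {G : Type*} [Group G]

lemma not_rpArc_one (y : G) : ¬ rpArc G 1 y := by
  simp [rpArc, zpowers_one_eq_bot]

lemma mem_DRPAut_apply_one {π : Equiv.Perm G} (hπ : π ∈ DRPAut G) : π 1 = 1 := by
  have hsink : ¬ rpArc G (π 1) (π (π.symm 1)) := fun h => not_rpArc_one _ ((hπ _ _).mp h)
  rw [Equiv.apply_symm_apply, rpArc, zpowers_one_eq_bot, bot_lt_iff_ne_bot, not_not] at hsink
  exact zpowers_eq_bot.mp hsink

lemma DRPAut_le_RPAut : DRPAut G ≤ RPAut G := fun _ hπ a b =>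
  or_comm.trans ((or_congr (hπ a b) (hπ b a)).trans or_comm)

lemma hatCls_eq_of_simEq {x y : G} (h : simEq G x y) : hatCls G x = hatCls G y :=
  Set.ext fun _ => ⟨fun hz w => (hz w).trans (h w), fun hz w => (hz w).trans (h w).symm⟩

lemma eq_one_of_zpowers_lt_of_prime {x z : G} (hp : (orderOf x).Prime)
    (hlt : zpowers z < zpowers x) : z = 1 := by
  have hdvd : orderOf z ∣ orderOf x := orderOf_dvd_of_mem_zpowers (hlt.le (mem_zpowers z))
  refine orderOf_eq_one_iff.mp ((hp.eq_one_or_self_of_dvd _ hdvd).resolve_right fun heq => ?_)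
  have : Finite (zpowers x) :=
    Nat.finite_of_card_ne_zero (by rw [Nat.card_zpowers]; exact hp.ne_zero)
  exact hlt.ne (eq_of_le_of_card_ge hlt.le (by rw [Nat.card_zpowers, Nat.card_zpowers, heq]))

lemma rpAdj_iff_eq_one_of_isMaxCyc {x : G} (hmax : IsMaxCyc G x) (hp : (orderOf x).Prime)
    (z : G) : rpAdj G x z ↔ z = 1 := by
  constructor
  · rintro (hup | hdown)
    · exact absurd (hmax z hup.le) hup.ne
    · exact eq_one_of_zpowers_lt_of_prime hp hdown
  · rintro rfl
    refine Or.inr ?_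
    rw [zpowers_one_eq_bot, bot_lt_iff_ne_bot, Ne, zpowers_eq_bot, ← orderOf_eq_one_iff]
    exact hp.ne_one

lemma simEq_apply_of_neighbours_eq_one {π : Equiv.Perm G} (hπ : π ∈ RPAut G) (h1 : π 1 = 1)
    {x : G} (hx : ∀ z, rpAdj G x z ↔ z = 1) : simEq G (π x) x := by
  intro z
  rw [hx, ← π.apply_symm_apply z, hπ, hx, π.apply_symm_apply, π.symm_apply_eq, h1]

end ReducedPowerGraph

theorem aut_DRP_typeIII_fixed_general {G : Type*} [Group G]
    (π : Equiv.Perm G) (hπ : π ∈ DRPAut G) (x : G) (hT : TypeIII G x) :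
    hatCls G (π x) = hatCls G x := by
  obtain ⟨hmax, hp⟩ := hT.2.2 x fun _ => Iff.rfl
  exact hatCls_eq_of_simEq <| simEq_apply_of_neighbours_eq_one (DRPAut_le_RPAut hπ)
    (mem_DRPAut_apply_one hπ) (rpAdj_iff_eq_one_of_isMaxCyc hmax hp)

/-- if `x̂` is of Type III and `π` is an automorphism of `→RP(G)`, then the
`≃`-class of `x^π` equals `x̂`. -/
theorem aut_DRP_typeIII_fixed {G : Type*} [Group G] [Fintype G]
    (π : Equiv.Perm G) (hπ : π ∈ DRPAut G) (x : G) (hT : TypeIII G x) :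
    hatCls G (π x) = hatCls G x :=
  aut_DRP_typeIII_fixed_general π hπ x hT
end
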